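/- Bates' function B(x,y) = 2 + xy/(√(1+x²)√(1+y²)) satisfies (1 + B_x²) B_{xy} - B_x B_y B_{xx} > 0 at every point of ℝ²; in particular the first Cartesian umbilic identifier d₁ never vanishes. -/

import Mathlib

/-
Bates' function separates as `B x y = 2 + σ x * σ y` with `σ t = t / √(1 + t²)`, so every partial
derivative is a product `σ⁽ⁱ⁾ x * σ⁽ʲ⁾ y` and
`d₁ = σ' x σ' y (1 + σ(y)² (σ'(x)² - σ x σ'' x))`.
Here `σ' > 0`, while `σ x σ'' x = -3x² / (1 + x²)³ ≤ 0`, so `d₁ > 0`.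
-/

noncomputable def B (x y : ℝ) : ℝ :=
  2 + x * y / (Real.sqrt (1 + x ^ 2) * Real.sqrt (1 + y ^ 2))

noncomputable def Bx (x y : ℝ) : ℝ := deriv (fun t => B t y) x
noncomputable def By (x y : ℝ) : ℝ := deriv (fun t => B x t) y
noncomputable def Bxx (x y : ℝ) : ℝ := deriv (fun t => Bx t y) x
noncomputable def Bxy (x y : ℝ) : ℝ := deriv (fun t => Bx x t) y

open Real

lemma umbilic_identifier_separable_pos {a b u v w : ℝ} (ha : 0 < a) (hb : 0 < b)
    (huw : u * w < a ^ 2) :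
    0 < (1 + (a * v) ^ 2) * (a * b) - (a * v) * (u * b) * (w * v) := by
  have h : (1 + (a * v) ^ 2) * (a * b) - (a * v) * (u * b) * (w * v)
      = a * b * (1 + v ^ 2 * (a ^ 2 - u * w)) := by ring
  rw [h]
  have : 0 ≤ v ^ 2 * (a ^ 2 - u * w) := mul_nonneg (sq_nonneg v) (sub_nonneg.mpr huw.le)
  positivity

lemma sqrt_one_add_sq_pos (t : ℝ) : 0 < √(1 + t ^ 2) := by positivity

lemma hasDerivAt_sqrt_one_add_sq (x : ℝ) :
    HasDerivAt (fun t => √(1 + t ^ 2)) (x / √(1 + x ^ 2)) x := by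
  have h := ((hasDerivAt_pow 2 x).const_add 1).sqrt (by positivity)
  convert h using 1
  field_simp
  ring

noncomputable def algSigmoid (t : ℝ) : ℝ := t / √(1 + t ^ 2)

lemma hasDerivAt_algSigmoid (x : ℝ) :
    HasDerivAt algSigmoid (√(1 + x ^ 2) ^ 3)⁻¹ x := by
  have hs : √(1 + x ^ 2) ^ 2 = 1 + x ^ 2 := sq_sqrt (by positivity)
  have := (sqrt_one_add_sq_pos x).ne'
  refine ((hasDerivAt_id' x).div (hasDerivAt_sqrt_one_add_sq x) this).congr_deriv ?_
  field_simp
  linear_combination hs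

lemma hasDerivAt_inv_sqrt_one_add_sq_pow_three (x : ℝ) :
    HasDerivAt (fun t => (√(1 + t ^ 2) ^ 3)⁻¹) (-3 * x / √(1 + x ^ 2) ^ 5) x := by
  have := (sqrt_one_add_sq_pos x).ne'
  refine (((hasDerivAt_sqrt_one_add_sq x).fun_pow 3).inv (pow_ne_zero 3 this)).congr_deriv ?_
  field_simp
  norm_num
  ring

lemma B_eq_algSigmoid_mul (x y : ℝ) : B x y = 2 + algSigmoid x * algSigmoid y := by
  rw [B, algSigmoid, algSigmoid, mul_div_mul_comm]

lemma Bx_eq (x y : ℝ) : Bx x y = (√(1 + x ^ 2) ^ 3)⁻¹ * algSigmoid y := by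
  simp only [Bx, B_eq_algSigmoid_mul]
  exact (((hasDerivAt_algSigmoid x).mul_const _).const_add 2).deriv

lemma By_eq (x y : ℝ) : By x y = algSigmoid x * (√(1 + y ^ 2) ^ 3)⁻¹ := by
  simp only [By, B_eq_algSigmoid_mul]
  exact (((hasDerivAt_algSigmoid y).const_mul _).const_add 2).deriv

lemma Bxx_eq (x y : ℝ) : Bxx x y = -3 * x / √(1 + x ^ 2) ^ 5 * algSigmoid y := by
  simp only [Bxx, Bx_eq]
  exact ((hasDerivAt_inv_sqrt_one_add_sq_pow_three x).mul_const _).deriv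

lemma Bxy_eq (x y : ℝ) : Bxy x y = (√(1 + x ^ 2) ^ 3)⁻¹ * (√(1 + y ^ 2) ^ 3)⁻¹ := by
  simp only [Bxy, Bx_eq]
  exact ((hasDerivAt_algSigmoid y).const_mul _).deriv

lemma algSigmoid_mul_neg_three_mul_div_nonpos (x : ℝ) :
    algSigmoid x * (-3 * x / √(1 + x ^ 2) ^ 5) ≤ 0 := by
  have h : algSigmoid x * (-3 * x / √(1 + x ^ 2) ^ 5) = -(3 * x ^ 2 / √(1 + x ^ 2) ^ 6) := by
    have := (sqrt_one_add_sq_pos x).ne'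
    rw [algSigmoid]
    field_simp
  rw [h, neg_nonpos]
  positivity

/-- The first Cartesian umbilic identifier of Bates' function is everywhere positive;
in particular it never vanishes. -/
theorem bates_d1_pos : ∀ x y : ℝ,
    0 < (1 + Bx x y ^ 2) * Bxy x y - Bx x y * By x y * Bxx x y := by
  intro x y
  rw [Bx_eq, By_eq, Bxx_eq, Bxy_eq]
  refine umbilic_identifier_separable_pos (by positivity) (by positivity) ?_
  exact (algSigmoid_mul_neg_three_mul_div_nonpos x).trans_lt (by positivity)
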